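/- Every complex eigenvalue μ of the matrix A + R satisfies |μ| ≤ 1, and 1 is a complex eigenvalue of A + R; hence the spectral radius of A + R equals 1. -/

import Mathlib

/-!
Write `D = diagonal (1 - b)`, so that `A + R = D * S`. The matrix `S * D = (1 - K)⁻¹ * (F - K)` is
row-stochastic: its entries are nonnegative because `(1 - K)⁻¹ = ∑ Kᵐ` (the ∞-operator norm of
`K = F * diagonal b` is at most `max b < 1`), and `(F - K) *ᵥ 1 = (1 - K) *ᵥ 1` because
`F *ᵥ 1 = 1`. Now `D * S` and `S * D` have the same nonzero spectrum, and the spectrum of a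
row-stochastic matrix lies in the closed unit disc (its ∞-operator norm is `1`) and contains `1`
(with eigenvector `1`).
-/

open Matrix

theorem spectrum.mem_mul_comm_iff {R A : Type*} [Field R] [Ring A] [Algebra R A] {a b : A}
    {μ : R} (hμ : μ ≠ 0) : μ ∈ spectrum R (a * b) ↔ μ ∈ spectrum R (b * a) := by
  simpa [hμ] using Set.ext_iff.mp (spectrum.nonzero_mul_comm a b) μ

namespace Matrix

variable {ι : Type*} [Fintype ι] [DecidableEq ι]

section LinftyOpNorm

attribute [local instance] Matrix.linftyOpNormedAddCommGroup Matrix.linftyOpNormedSpace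
  Matrix.linftyOpNormedRing Matrix.linftyOpNormedAlgebra

theorem linfty_opNorm_map_ofReal {m n : Type*} [Fintype m] [Fintype n] (P : Matrix m n ℝ) :
    ‖P.map Complex.ofReal‖ = ‖P‖ := by
  simp [linfty_opNorm_def, Complex.nnnorm_real]

theorem linfty_opNorm_le_one_of_mem_rowStochastic {P : Matrix ι ι ℝ}
    (hP : P ∈ rowStochastic ℝ ι) : ‖P‖ ≤ 1 := by
  rw [linfty_opNorm_def, NNReal.coe_le_one, Finset.sup_le_iff]
  intro i _
  rw [← NNReal.coe_le_one]
  push_cast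
  simp_rw [Real.norm_of_nonneg (nonneg_of_mem_rowStochastic hP)]
  exact (sum_row_of_mem_rowStochastic hP i).le

theorem inv_one_sub_apply_nonneg {K : Matrix ι ι ℝ} (hK : ∀ i j, 0 ≤ K i j) (hnorm : ‖K‖ < 1)
    (i j : ι) : 0 ≤ (1 - K)⁻¹ i j := by
  rw [nonsing_inv_eq_ringInverse]
  have hsum := Pi.hasSum.mp (Pi.hasSum.mp (hasSum_geom_series_inverse K hnorm) i) j
  exact hasSum_le (fun k => pow_apply_nonneg hK k i j) hasSum_zero hsum

theorem norm_le_one_of_mem_spectrum_of_mem_rowStochastic [Nonempty ι] {P : Matrix ι ι ℝ}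
    (hP : P ∈ rowStochastic ℝ ι) {μ : ℂ} (hμ : μ ∈ spectrum ℂ (P.map Complex.ofReal)) :
    ‖μ‖ ≤ 1 :=
  (spectrum.norm_le_norm_of_mem hμ).trans
    ((linfty_opNorm_map_ofReal P).trans_le (linfty_opNorm_le_one_of_mem_rowStochastic hP))

theorem linfty_opNorm_mul_diagonal_lt_one {F : Matrix ι ι ℝ} (hF : F ∈ rowStochastic ℝ ι)
    {b : ι → ℝ} (hb0 : ∀ j, 0 ≤ b j) (hb1 : ∀ j, b j < 1) : ‖F * diagonal b‖ < 1 := by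
  have hb : ‖b‖ < 1 := (pi_norm_lt_iff one_pos).2 fun j => by
    rw [Real.norm_of_nonneg (hb0 j)]; exact hb1 j
  calc ‖F * diagonal b‖ ≤ ‖F‖ * ‖diagonal b‖ := linfty_opNorm_mul _ _
    _ ≤ 1 * ‖b‖ := by
      rw [linfty_opNorm_diagonal]
      gcongr
      exact linfty_opNorm_le_one_of_mem_rowStochastic hF
    _ < 1 := by rwa [one_mul]

theorem inv_one_sub_mul_mul_diagonal_mem_rowStochastic {F : Matrix ι ι ℝ}
    (hF : F ∈ rowStochastic ℝ ι) {b : ι → ℝ} (hb0 : ∀ j, 0 ≤ b j) (hb1 : ∀ j, b j < 1) :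
    (1 - F * diagonal b)⁻¹ * F * diagonal (1 - b) ∈ rowStochastic ℝ ι := by
  set K := F * diagonal b with hKdef
  have hK : ‖K‖ < 1 := linfty_opNorm_mul_diagonal_lt_one hF hb0 hb1
  have hKnonneg : ∀ i j, 0 ≤ K i j := fun i j => by
    rw [hKdef, mul_diagonal]; exact mul_nonneg (nonneg_of_mem_rowStochastic hF) (hb0 j)
  have hdet : IsUnit (1 - K).det := (isUnit_iff_isUnit_det _).1 (isUnit_one_sub_of_norm_lt_one hK)
  refine mem_rowStochastic.2 ⟨fun i j => ?_, ?_⟩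
  · rw [mul_diagonal]
    refine mul_nonneg (Finset.sum_nonneg fun k _ => mul_nonneg ?_ ?_) (sub_nonneg.2 (hb1 j).le)
    · exact inv_one_sub_apply_nonneg hKnonneg hK i k
    · exact nonneg_of_mem_rowStochastic hF
  · have hFD : F * diagonal (1 - b) = F - K := by
      ext i j
      simp only [hKdef, mul_diagonal, sub_apply, Pi.sub_apply, Pi.one_apply, mul_sub, mul_one]
    have hrow : F *ᵥ 1 - K *ᵥ 1 = (1 - K) *ᵥ 1 := by
      rw [one_vecMul_of_mem_rowStochastic hF, sub_mulVec, one_mulVec]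
    rw [Matrix.mul_assoc, hFD, ← mulVec_mulVec, sub_mulVec, hrow, mulVec_mulVec,
      nonsing_inv_mul _ hdet, one_mulVec]

end LinftyOpNorm

theorem one_mem_spectrum_of_mem_rowStochastic [Nonempty ι] {P : Matrix ι ι ℝ}
    (hP : P ∈ rowStochastic ℝ ι) : (1 : ℂ) ∈ spectrum ℂ (P.map Complex.ofReal) := by
  rw [spectrum.mem_iff, map_one, isUnit_iff_isUnit_det, isUnit_iff_ne_zero, not_not,
    ← exists_mulVec_eq_zero_iff]
  refine ⟨1, one_ne_zero, ?_⟩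
  rw [sub_mulVec, one_mulVec, sub_eq_zero]
  ext i
  simp [mulVec, dotProduct, ← Complex.ofReal_sum, sum_row_of_mem_rowStochastic hP i]

end Matrix

theorem stmt_6_general (n : ℕ) (hn : 1 ≤ n)
    (F : Matrix (Fin n) (Fin n) ℝ)
    (hFnonneg : ∀ i j, 0 ≤ F i j)
    (hFrow : ∀ i, ∑ j, F i j = 1)
    (b : Fin n → ℝ) (hb0 : ∀ j, 0 ≤ b j) (hb1 : ∀ j, b j < 1)
    (K : Matrix (Fin n) (Fin n) ℝ)
    (hK : ∀ i j, K i j = F i j * b j)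
    (S : Matrix (Fin n) (Fin n) ℝ)
    (hS : S = (1 - K)⁻¹ * F)
    (A R : Matrix (Fin n) (Fin n) ℝ)
    (hA : ∀ i j, A i j = (1 - b i) * S i j * (1 - b j))
    (hR : ∀ i j, R i j = (1 - b i) * S i j * b j) :
    (∀ μ : ℂ, μ ∈ spectrum ℂ ((A + R).map Complex.ofReal) → ‖μ‖ ≤ 1) ∧
    (1 : ℂ) ∈ spectrum ℂ ((A + R).map Complex.ofReal) ∧
    IsGreatest ((fun z : ℂ => ‖z‖) '' spectrum ℂ ((A + R).map Complex.ofReal)) 1 := by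
  have : Nonempty (Fin n) := ⟨⟨0, hn⟩⟩
  have hKF : K = F * diagonal b := by
    ext i j
    rw [hK, mul_diagonal]
  have hT : S * diagonal (1 - b) ∈ rowStochastic ℝ (Fin n) := by
    rw [hS, hKF]
    exact inv_one_sub_mul_mul_diagonal_mem_rowStochastic
      (mem_rowStochastic_iff_sum.2 ⟨hFnonneg, hFrow⟩) hb0 hb1
  have hswap : ∀ μ : ℂ, μ ≠ 0 → (μ ∈ spectrum ℂ ((A + R).map Complex.ofReal) ↔
      μ ∈ spectrum ℂ ((S * diagonal (1 - b)).map Complex.ofReal)) := by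
    intro μ hμ
    have hAR : A + R = diagonal (1 - b) * S := by
      ext i j
      rw [Matrix.add_apply, hA, hR, diagonal_mul, Pi.sub_apply, Pi.one_apply]
      ring
    have hmap (M N : Matrix (Fin n) (Fin n) ℝ) :
        (M * N).map Complex.ofReal = M.map Complex.ofReal * N.map Complex.ofReal :=
      Matrix.map_mul (f := Complex.ofRealHom)
    rw [hAR, hmap, hmap]
    exact spectrum.mem_mul_comm_iff hμ
  have hle : ∀ μ ∈ spectrum ℂ ((A + R).map Complex.ofReal), ‖μ‖ ≤ 1 := by
    intro μ hμ
    rcases eq_or_ne μ 0 with rfl | hμ0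
    · simp
    · exact norm_le_one_of_mem_spectrum_of_mem_rowStochastic hT ((hswap μ hμ0).1 hμ)
  have hone := (hswap 1 one_ne_zero).2 (one_mem_spectrum_of_mem_rowStochastic hT)
  exact ⟨hle, hone, ⟨1, hone, norm_one⟩, by rintro _ ⟨μ, hμ, rfl⟩; exact hle μ hμ⟩

/-- Every complex eigenvalue `μ` of `A + R` satisfies `|μ| ≤ 1`,
and `1` is a complex eigenvalue of `A + R`; hence the spectral radius of
`A + R` equals `1`. -/
theorem stmt_6 (n : ℕ) (hn : 1 ≤ n)
    (F : Matrix (Fin n) (Fin n) ℝ)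
    (hFnonneg : ∀ i j, 0 ≤ F i j)
    (hFrow : ∀ i, ∑ j, F i j = 1)
    (b : Fin n → ℝ) (hb0 : ∀ j, 0 ≤ b j) (hb1 : ∀ j, b j < 1)
    (K : Matrix (Fin n) (Fin n) ℝ)
    (hK : ∀ i j, K i j = F i j * b j)
    (hInv : IsUnit (1 - K))
    (S : Matrix (Fin n) (Fin n) ℝ)
    (hS : S = (1 - K)⁻¹ * F)
    (A R : Matrix (Fin n) (Fin n) ℝ)
    (hA : ∀ i j, A i j = (1 - b i) * S i j * (1 - b j))
    (hR : ∀ i j, R i j = (1 - b i) * S i j * b j) :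
    (∀ μ : ℂ, μ ∈ spectrum ℂ ((A + R).map Complex.ofReal) → ‖μ‖ ≤ 1) ∧
    (1 : ℂ) ∈ spectrum ℂ ((A + R).map Complex.ofReal) ∧
    IsGreatest ((fun z : ℂ => ‖z‖) '' spectrum ℂ ((A + R).map Complex.ofReal)) 1 :=
  stmt_6_general n hn F hFnonneg hFrow b hb0 hb1 K hK S hS A R hA hR
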